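/- Let X be a real Hilbert space regarded as a Jordan triple with triple product {x,y,z} := (1/2)(⟨x,y⟩z + ⟨z,y⟩x), and let J : X → X* be the Riesz map. For a linear map δ : X → X*, setting T := J⁻¹∘δ : X → X, the following are equivalent: (a) δ is an inner ternary derivation from X to X*; (b) T is a finite-rank bounded linear operator satisfying ⟨Tx,y⟩ = −⟨x,Ty⟩ for all x,y ∈ X (i.e. T* = −T). -/
import Mathlib


/-!
STATEMENT 15: Let `X` be a real Hilbert space, a Jordan triple under
`{x,y,z} := (1/2)(⟨x,y⟩z + ⟨z,y⟩x)`, and let `J : X → X*` be the Riesz map.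
For a linear map `δ : X → X*` and `T := J⁻¹∘δ`, the following are equivalent:
(a) `δ` is an inner ternary derivation from `X` to `X*`;
(b) `T` is a finite-rank bounded linear operator with `⟨Tx,y⟩ = −⟨x,Ty⟩` for all `x,y`.
-/

open scoped RealInnerProductSpace

noncomputable section

variable {X : Type*} [NormedAddCommGroup X] [InnerProductSpace ℝ X] [CompleteSpace X]

/-- The triple product `{x,y,z} = (1/2)(⟨x,y⟩z + ⟨z,y⟩x)` on a real Hilbert space. -/
def jtripR (a b c : X) : X := (2 : ℝ)⁻¹ • (⟪a, b⟫ • c + ⟪c, b⟫ • a)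

/-- A map `δ : X → X*` is an inner ternary derivation: a finite sum of the maps
`δ(b,φ) : a ↦ {b,φ,a} − {φ,b,a}`, i.e. pointwise `a ↦ (x ↦ φ({b,x,a}) − φ({b,a,x}))`,
with `b ∈ X`, `φ ∈ X*`. -/
def IsInnerTernaryDerFunR (δ : X → (X →L[ℝ] ℝ)) : Prop :=
  ∃ (n : ℕ) (b : Fin n → X) (φ : Fin n → (X →L[ℝ] ℝ)),
    ∀ a x : X, δ a x
      = ∑ i, (φ i (jtripR (b i) x a) - φ i (jtripR (b i) a x))

lemma term_eq (b c a x : X) :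
    ⟪c, jtripR b x a⟫ - ⟪c, jtripR b a x⟫
      = (2:ℝ)⁻¹ * (⟪c, a⟫ * ⟪b, x⟫ - ⟪b, a⟫ * ⟪c, x⟫) := by
  simp only [jtripR, inner_smul_right, inner_add_right]
  rw [real_inner_comm a x]
  ring

lemma key_sum {n : ℕ} (b c : Fin n → X) (a x : X) :
    ∑ i, (⟪c i, jtripR (b i) x a⟫ - ⟪c i, jtripR (b i) a x⟫)
      = ⟪(2:ℝ)⁻¹ • ∑ i, (⟪c i, a⟫ • b i - ⟪b i, a⟫ • c i), x⟫ := by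
  rw [real_inner_smul_left, sum_inner, Finset.mul_sum]
  refine Finset.sum_congr rfl fun i _ => ?_
  rw [term_eq]
  simp [inner_sub_left, real_inner_smul_left]


/-- For a linear `δ : X → X*` with `T := J⁻¹∘δ` (`J` the Riesz map): `δ` is an inner
ternary derivation iff `T` is a finite-rank bounded operator with `T* = −T`. -/
theorem innerTernaryDer_iff_finiteRank_skew_adjoint
    (δ : X →ₗ[ℝ] (X →L[ℝ] ℝ))
    (T : X → X) (hT : ∀ x, T x = (InnerProductSpace.toDual ℝ X).symm (δ x)) :
    IsInnerTernaryDerFunR ⇑δ ↔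
      (Continuous T ∧ FiniteDimensional ℝ ↥(Submodule.span ℝ (Set.range T))
        ∧ ∀ x y : X, ⟪T x, y⟫ = - ⟪x, T y⟫) := by
  have hδ : ∀ a x, δ a x = ⟪T a, x⟫ := by
    intro a x
    rw [hT a, InnerProductSpace.toDual_symm_apply]
  constructor
  · rintro ⟨n, b, φ, hrep⟩
    set c : Fin n → X := fun i => (InnerProductSpace.toDual ℝ X).symm (φ i) with hc
    have hφ : ∀ i (y : X), φ i y = ⟪c i, y⟫ := by
      intro i y
      rw [hc]
      exact (InnerProductSpace.toDual_symm_apply).symm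
    have hTa : ∀ a, T a = (2:ℝ)⁻¹ • ∑ i, (⟪c i, a⟫ • b i - ⟪b i, a⟫ • c i) := by
      intro a
      apply ext_inner_right ℝ
      intro x
      rw [← hδ, hrep a x, ← key_sum]
      exact Finset.sum_congr rfl fun i _ => by rw [hφ, hφ]
    refine ⟨?_, ?_, ?_⟩
    · have : Continuous fun a : X => (2:ℝ)⁻¹ • ∑ i, (⟪c i, a⟫ • b i - ⟪b i, a⟫ • c i) := by
        apply Continuous.const_smul
        apply continuous_finset_sum
        intro i _
        exact ((continuous_const.inner continuous_id).smul continuous_const).sub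
          ((continuous_const.inner continuous_id).smul continuous_const)
      exact (funext hTa ▸ this : Continuous T)
    · have hfin : FiniteDimensional ℝ
          ↥(Submodule.span ℝ (Set.range b ∪ Set.range c)) :=
        FiniteDimensional.span_of_finite ℝ ((Set.finite_range b).union (Set.finite_range c))
      refine Submodule.finiteDimensional_of_le (S₂ := Submodule.span ℝ (Set.range b ∪ Set.range c)) ?_
      rw [Submodule.span_le]
      rintro _ ⟨a, rfl⟩
      rw [hTa]
      refine Submodule.smul_mem _ _ (Submodule.sum_mem _ fun i _ => Submodule.sub_mem _ ?_ ?_)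
      · exact Submodule.smul_mem _ _ (Submodule.subset_span (Or.inl ⟨i, rfl⟩))
      · exact Submodule.smul_mem _ _ (Submodule.subset_span (Or.inr ⟨i, rfl⟩))
    · intro x y
      rw [hTa x, hTa y, real_inner_smul_left, real_inner_smul_right, sum_inner, inner_sum,
        ← mul_neg, ← Finset.sum_neg_distrib]
      congr 1
      refine Finset.sum_congr rfl fun i _ => ?_
      simp only [inner_sub_left, inner_sub_right, real_inner_smul_left, real_inner_smul_right]
      rw [real_inner_comm x (b i), real_inner_comm x (c i)]
      ring
  · rintro ⟨hcont, hfd, hskew⟩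
    -- linearity of T
    have hTadd : ∀ a b : X, T (a + b) = T a + T b := by
      intro a b; simp [hT, map_add]
    have hTsmul : ∀ (r : ℝ) (a : X), T (r • a) = r • T a := by
      intro r a; simp [hT, map_smul]
    let Tl : X →ₗ[ℝ] X :=
      { toFun := T, map_add' := hTadd, map_smul' := hTsmul }
    set V := Submodule.span ℝ (Set.range T) with hV
    haveI : FiniteDimensional ℝ V := hfd
    let e := stdOrthonormalBasis ℝ V
    set n := Module.finrank ℝ V with hn
    set f : Fin n → X := fun i => (e i : X) with hf
    have hmemV : ∀ a, T a ∈ V := fun a => Submodule.subset_span ⟨a, rfl⟩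
    have hcoe : ∀ v : V, (v : X) = ∑ i, ⟪f i, (v : X)⟫ • f i := by
      intro v
      conv_lhs => rw [← e.sum_repr' v]
      push_cast
      refine Finset.sum_congr rfl fun i _ => ?_
      congr 1
    have hT1 : ∀ a, T a = ∑ i, ⟪f i, T a⟫ • f i := fun a => hcoe ⟨T a, hmemV a⟩
    have horth : ∀ i j, ⟪f i, f j⟫ = if i = j then 1 else 0 := by
      intro i j
      have := e.orthonormal
      rw [orthonormal_iff_ite] at this
      exact this i j
    have hq : ∀ a i, ⟪f i, a - ∑ j, ⟪f j, a⟫ • f j⟫ = 0 := by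
      intro a i
      rw [inner_sub_right, inner_sum]
      simp only [real_inner_smul_right]
      rw [Finset.sum_eq_single i]
      · rw [horth i i]; simp
      · intro j _ hj; rw [horth i j]; simp [hj.symm]
      · intro h; exact absurd (Finset.mem_univ i) h
    have hTq : ∀ a, T (a - ∑ j, ⟪f j, a⟫ • f j) = 0 := by
      intro a
      set q := a - ∑ j, ⟪f j, a⟫ • f j with hqdef
      have h1 : ⟪T q, T q⟫ = -⟪q, T (T q)⟫ := hskew q (T q)
      have hq0 : ∀ i, ⟪f i, q⟫ = 0 := fun i => by rw [hqdef]; exact hq a i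
      have h2 : ⟪q, T (T q)⟫ = 0 := by
        rw [hT1 (T q), inner_sum]
        refine Finset.sum_eq_zero fun i _ => ?_
        have h3 : ⟪q, f i⟫ = (0:ℝ) := by rw [real_inner_comm]; exact hq0 i
        rw [real_inner_smul_right]
        simp [h3]
      rw [h2, neg_zero] at h1
      exact inner_self_eq_zero.mp h1
    have hT2 : ∀ a, T a = ∑ i, ⟪f i, a⟫ • T (f i) := by
      intro a
      have : T a = T (a - ∑ j, ⟪f j, a⟫ • f j) + T (∑ j, ⟪f j, a⟫ • f j) := by
        rw [← hTadd, sub_add_cancel]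
      rw [this, hTq, zero_add]
      rw [show T (∑ j, ⟪f j, a⟫ • f j) = Tl (∑ j, ⟪f j, a⟫ • f j) from rfl,
        map_sum]
      exact Finset.sum_congr rfl fun i _ => by
        rw [show Tl (⟪f i, a⟫ • f i) = ⟪f i, a⟫ • Tl (f i) from map_smul Tl _ _]; rfl
    refine ⟨n, f, fun i => (InnerProductSpace.toDual ℝ X) (-(T (f i))), fun a x => ?_⟩
    have hdual : ∀ (y z : X), (InnerProductSpace.toDual ℝ X) y z = ⟪y, z⟫ := fun y z => rfl
    calc δ a x = ⟪T a, x⟫ := hδ a x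
      _ = ⟪(2:ℝ)⁻¹ • ∑ i, (⟪-(T (f i)), a⟫ • f i - ⟪f i, a⟫ • (-(T (f i)))), x⟫ := by
          congr 1
          have e1 : ∑ i, (⟪-(T (f i)), a⟫ • f i - ⟪f i, a⟫ • (-(T (f i))))
              = (∑ i, ⟪f i, T a⟫ • f i) + ∑ i, ⟪f i, a⟫ • T (f i) := by
            rw [← Finset.sum_add_distrib]
            refine Finset.sum_congr rfl fun i _ => ?_
            have : ⟪-(T (f i)), a⟫ = ⟪f i, T a⟫ := by
              have h4 : ⟪T a, f i⟫ = -⟪a, T (f i)⟫ := hskew a (f i)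
              have h5 : ⟪-(T (f i)), a⟫ = -⟪T (f i), a⟫ := by
                simp [inner_neg_left]
              have h6 : ⟪T (f i), a⟫ = ⟪a, T (f i)⟫ := real_inner_comm _ _
              have h7 : ⟪f i, T a⟫ = ⟪T a, f i⟫ := real_inner_comm _ _
              linarith
            rw [this]
            rw [smul_neg, sub_neg_eq_add]
          rw [e1, ← hT1, ← hT2, smul_add, ← add_smul]
          norm_num
      _ = ∑ i, (⟪-(T (f i)), jtripR (f i) x a⟫ - ⟪-(T (f i)), jtripR (f i) a x⟫) :=
          (key_sum f (fun i => -(T (f i))) a x).symm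
      _ = _ := by
          refine Finset.sum_congr rfl fun i _ => ?_
          rw [hdual, hdual]
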